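/- Let V : ℤ^d → ℝ admit a smooth extension Ṽ : ℝ^d → ℝ with liminf_{|x|→∞} Ṽ(x) ≥ 0 and, for some 0 < θ ≤ 1, |∂^α Ṽ(x)| ≤ C_α(1+|x|)^{−θ|α|} for every multi-index α. Fix E < 0. If u ∈ ℓ²(ℤ^d) satisfies Hu = Eu, then for every ε > 0 there exists C_ε > 0 such that |u(x)| ≤ C_ε e^{−(1−ε)ρ_E(x)} for all x ∈ ℤ^d. -/

import Mathlib

open MeasureTheory Real Filter Topology

noncomputable section

/-- The discrete Schrödinger operator `H` on `ℤ^d`: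
`(Hu)(x) = −Σ_{|x−y|=1}(u(y)−u(x)) + V(x)u(x)`. -/
def HlatZ {d : ℕ} (V : (Fin d → ℤ) → ℝ) (u : (Fin d → ℤ) → ℂ) (x : Fin d → ℤ) : ℂ :=
  -(∑ j : Fin d, ((u (x + Pi.single j 1) - u x) + (u (x - Pi.single j 1) - u x)))
    + (V x) * u x

/-- The weight `ρ_E(x) = sup_{ξ ∈ K^E} ⟨x, ξ⟩`, where
`K^E = {ξ : 4 Σ_j sinh²(ξ_j/2) ≤ |E|}`. -/
def rhoE {d : ℕ} (E : ℝ) (x : Fin d → ℤ) : ℝ :=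
  sSup {r | ∃ ξ : Fin d → ℝ, (4 * ∑ j, Real.sinh (ξ j / 2) ^ 2 ≤ |E|) ∧
    r = ∑ j, (x j : ℝ) * ξ j}

/- ### Auxiliary lemmas -/

lemma sinh_scale_aux {l : ℝ} (hl0 : 0 ≤ l) (hl1 : l ≤ 1) {t : ℝ} (ht : 0 ≤ t) :
    Real.sinh (l * t) ≤ l * Real.sinh t := by
  have hmono : MonotoneOn (fun s => l * Real.sinh s - Real.sinh (l * s)) (Set.Ici 0) := by
    have hder : ∀ s : ℝ, HasDerivAt (fun s => l * Real.sinh s - Real.sinh (l * s))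
        (l * Real.cosh s - Real.cosh (l * s) * l) s := by
      intro s
      have hc : HasDerivAt (fun y : ℝ => Real.sinh (l * y)) (Real.cosh (l * s) * l) s := by
        have := (Real.hasDerivAt_sinh (l * s)).comp s
          (((hasDerivAt_id s).const_mul l) : HasDerivAt (fun y : ℝ => l * y) (l * 1) s)
        simpa [Function.comp_def] using this
      exact ((Real.hasDerivAt_sinh s).const_mul l).sub hc
    apply monotoneOn_of_deriv_nonneg (convex_Ici 0)
    · exact (Continuous.continuousOn (by fun_prop))
    · intro s _
      exact ((hder s).differentiableAt).differentiableWithinAt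
    · intro s hs
      rw [(hder s).deriv]
      have h1 : Real.cosh (l * s) ≤ Real.cosh s := by
        rw [Real.cosh_le_cosh]
        have hsp : 0 < s := by simpa using hs
        rw [abs_of_nonneg (by positivity), abs_of_nonneg hsp.le]
        nlinarith
      nlinarith
  have := hmono (Set.self_mem_Ici) (Set.mem_Ici.2 ht) ht
  simp only [Real.sinh_zero, mul_zero, sub_zero] at this
  linarith

lemma sinh_sq_scale_aux {l : ℝ} (hl0 : 0 ≤ l) (hl1 : l ≤ 1) (t : ℝ) :
    Real.sinh (l * t) ^ 2 ≤ l ^ 2 * Real.sinh t ^ 2 := by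
  have h1 : |Real.sinh (l * t)| ≤ l * |Real.sinh t| := by
    rw [Real.abs_sinh, Real.abs_sinh, abs_mul, abs_of_nonneg hl0]
    exact sinh_scale_aux hl0 hl1 (abs_nonneg t)
  calc Real.sinh (l * t) ^ 2 = |Real.sinh (l * t)| ^ 2 := (sq_abs _).symm
    _ ≤ (l * |Real.sinh t|) ^ 2 := by nlinarith [abs_nonneg (Real.sinh (l*t))]
    _ = l ^ 2 * Real.sinh t ^ 2 := by rw [mul_pow, sq_abs]

lemma exp_add_exp_neg_aux (s : ℝ) :
    Real.exp s + Real.exp (-s) = 2 + 4 * Real.sinh (s / 2) ^ 2 := by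
  rw [Real.sinh_eq]
  have h1 : Real.exp s = Real.exp (s / 2) * Real.exp (s / 2) := by
    rw [← Real.exp_add]; ring_nf
  have h2 : Real.exp (-s) = Real.exp (-(s / 2)) * Real.exp (-(s / 2)) := by
    rw [← Real.exp_add]; ring_nf
  have h4 : rexp (s * (1/2)) * rexp (s * (-1/2)) = 1 := by
    rw [← Real.exp_add]; norm_num
  rw [h1, h2]; ring_nf; nlinarith [h4]

lemma rhoE_spec {d : ℕ} (E : ℝ) (x : Fin d → ℤ) :
    (∃ ξ : Fin d → ℝ, (4 * ∑ j, Real.sinh (ξ j / 2) ^ 2 ≤ |E|) ∧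
        rhoE E x = ∑ j, (x j : ℝ) * ξ j) ∧
    ∀ ξ : Fin d → ℝ, 4 * ∑ j, Real.sinh (ξ j / 2) ^ 2 ≤ |E| →
      ∑ j, (x j : ℝ) * ξ j ≤ rhoE E x := by
  classical
  set K : Set (Fin d → ℝ) := {ξ | 4 * ∑ j, Real.sinh (ξ j / 2) ^ 2 ≤ |E|} with hKdef
  set f : (Fin d → ℝ) → ℝ := fun ξ => ∑ j, (x j : ℝ) * ξ j with hfdef
  have hK0 : (0 : Fin d → ℝ) ∈ K := by
    simp [hKdef, Set.mem_setOf_eq, abs_nonneg]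
  set B : ℝ := 2 * Real.arsinh (Real.sqrt |E| / 2) with hBdef
  have hsub : K ⊆ Set.Icc (fun _ => -B) (fun _ => B) := by
    intro ξ hξ
    rw [Set.mem_Icc]
    have hbd : ∀ j, |ξ j| ≤ B := by
      intro j
      have hterm : Real.sinh (ξ j / 2) ^ 2 ≤ |E| / 4 := by
        have h1 := Finset.single_le_sum (f := fun i => Real.sinh (ξ i / 2) ^ 2)
          (fun i _ => sq_nonneg _) (Finset.mem_univ j)
        have h2 : 4 * ∑ i, Real.sinh (ξ i / 2) ^ 2 ≤ |E| := hξ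
        linarith
      have h2 : Real.sinh (ξ j / 2) ^ 2 ≤ (Real.sqrt |E| / 2) ^ 2 := by
        rw [div_pow, Real.sq_sqrt (abs_nonneg E)]; norm_num; linarith
      have habs : |Real.sinh (ξ j / 2)| ≤ Real.sqrt |E| / 2 := by
        nlinarith [abs_nonneg (Real.sinh (ξ j / 2)), sq_abs (Real.sinh (ξ j / 2)),
          Real.sqrt_nonneg |E|]
      have h3 : Real.sinh |ξ j / 2| ≤ Real.sinh (Real.arsinh (Real.sqrt |E| / 2)) := by
        rw [Real.sinh_arsinh, ← Real.abs_sinh]; exact habs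
      have h4 : |ξ j / 2| ≤ Real.arsinh (Real.sqrt |E| / 2) := Real.sinh_le_sinh.1 h3
      rw [abs_div] at h4
      have h5 : |(2:ℝ)| = 2 := by norm_num
      rw [h5] at h4
      rw [hBdef]
      linarith
    constructor <;> intro j <;> have := abs_le.1 (hbd j)
    · simpa using this.1
    · simpa using this.2
  have hcl : IsClosed K := by
    have : Continuous fun ξ : Fin d → ℝ => 4 * ∑ j, Real.sinh (ξ j / 2) ^ 2 := by
      apply continuous_const.mul
      apply continuous_finset_sum
      intro j _
      exact (Real.continuous_sinh.comp ((continuous_apply j).div_const 2)).pow 2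
    exact isClosed_le this continuous_const
  have hKcomp : IsCompact K := (isCompact_Icc).of_isClosed_subset hcl hsub
  have hfcont : Continuous f := by
    apply continuous_finset_sum
    intro j _
    exact continuous_const.mul (continuous_apply j)
  have himg : {r | ∃ ξ : Fin d → ℝ, (4 * ∑ j, Real.sinh (ξ j / 2) ^ 2 ≤ |E|) ∧
      r = ∑ j, (x j : ℝ) * ξ j} = f '' K := by
    ext r
    constructor
    · rintro ⟨ξ, h1, h2⟩; exact ⟨ξ, h1, h2.symm⟩
    · rintro ⟨ξ, h1, h2⟩; exact ⟨ξ, h1, h2.symm⟩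
  have hic : IsCompact (f '' K) := hKcomp.image hfcont
  have hne : (f '' K).Nonempty := ⟨f 0, Set.mem_image_of_mem _ hK0⟩
  have hrho : rhoE E x = sSup (f '' K) := by rw [rhoE, himg]
  constructor
  · obtain ⟨ξ, hξK, hξeq⟩ := hic.sSup_mem hne
    exact ⟨ξ, hξK, by rw [hrho, ← hξeq]⟩
  · intro ξ hξ
    rw [hrho]
    exact le_csSup hic.bddAbove ⟨ξ, hξ, rfl⟩

lemma rhoE_nonneg' {d : ℕ} (E : ℝ) (x : Fin d → ℤ) : 0 ≤ rhoE E x := by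
  have h := (rhoE_spec E x).2 0 (by simp [abs_nonneg])
  simpa using h

lemma sum_add_single {d : ℕ} (x : Fin d → ℤ) (ξ : Fin d → ℝ) (j : Fin d) :
    ∑ i, (((x + Pi.single j 1 : Fin d → ℤ)) i : ℝ) * ξ i = (∑ i, (x i : ℝ) * ξ i) + ξ j := by
  classical
  have h : ∀ i, (((x + Pi.single j 1 : Fin d → ℤ)) i : ℝ) * ξ i
      = (x i : ℝ) * ξ i + (if i = j then ξ i else 0) := by
    intro i
    simp only [Pi.add_apply, Pi.single_apply]
    by_cases hij : i = j <;> simp [hij] <;> push_cast <;> ring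
  rw [Finset.sum_congr rfl (fun i _ => h i), Finset.sum_add_distrib,
    Finset.sum_ite_eq' Finset.univ j (fun i => ξ i)]
  simp

lemma sum_sub_single {d : ℕ} (x : Fin d → ℤ) (ξ : Fin d → ℝ) (j : Fin d) :
    ∑ i, (((x - Pi.single j 1 : Fin d → ℤ)) i : ℝ) * ξ i = (∑ i, (x i : ℝ) * ξ i) - ξ j := by
  classical
  have h : ∀ i, (((x - Pi.single j 1 : Fin d → ℤ)) i : ℝ) * ξ i
      = (x i : ℝ) * ξ i - (if i = j then ξ i else 0) := by
    intro i
    simp only [Pi.sub_apply, Pi.single_apply]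
    by_cases hij : i = j <;> simp [hij] <;> push_cast <;> ring
  rw [Finset.sum_congr rfl (fun i _ => h i), Finset.sum_sub_distrib,
    Finset.sum_ite_eq' Finset.univ j (fun i => ξ i)]
  simp

lemma eigen_sum_aux {d : ℕ} (V : (Fin d → ℤ) → ℝ) (u : (Fin d → ℤ) → ℂ) (E : ℝ)
    (heig : ∀ x, HlatZ V u x = (E : ℂ) * u x) (x : Fin d → ℤ) :
    ∑ j : Fin d, (u (x + Pi.single j 1) + u (x - Pi.single j 1))
      = ((2 * (d : ℝ) + V x - E : ℝ) : ℂ) * u x := by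
  have h := heig x
  rw [HlatZ] at h
  have hsplit : ∑ j : Fin d, ((u (x + Pi.single j 1) - u x) + (u (x - Pi.single j 1) - u x))
      = (∑ j : Fin d, (u (x + Pi.single j 1) + u (x - Pi.single j 1))) - (2 * (d : ℂ)) * u x := by
    rw [Finset.sum_congr rfl (fun j _ => by ring :
      ∀ j ∈ Finset.univ, (u (x + Pi.single j 1) - u x) + (u (x - Pi.single j 1) - u x)
        = (u (x + Pi.single j 1) + u (x - Pi.single j 1)) - 2 * u x)]
    rw [Finset.sum_sub_distrib, Finset.sum_const, Finset.card_univ, Fintype.card_fin,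
      nsmul_eq_mul]
    ring
  rw [hsplit] at h
  push_cast at h ⊢
  linear_combination -h

/-- Embedding of the lattice in Euclidean space. -/
def embZ {d : ℕ} (x : Fin d → ℤ) : EuclideanSpace ℝ (Fin d) := WithLp.toLp 2 (fun i => (x i : ℝ))

lemma embZ_coord_le {d : ℕ} (x : Fin d → ℤ) (i : Fin d) : |(x i : ℝ)| ≤ ‖embZ x‖ := by
  rw [EuclideanSpace.norm_eq]
  have h1 : |(x i : ℝ)| = Real.sqrt (‖embZ x i‖ ^ 2) := by
    rw [Real.sqrt_sq_eq_abs]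
    simp [embZ]
  rw [h1]
  apply Real.sqrt_le_sqrt
  exact Finset.single_le_sum (f := fun j => ‖embZ x j‖ ^ 2) (fun j _ => sq_nonneg _)
    (Finset.mem_univ i)

set_option maxHeartbeats 1600000 in
/-- exponential decay of `ℓ²` eigenfunctions of the discrete Schrödinger
operator on `ℤ^d` with eigenvalue `E < 0`: for every `ε > 0`,
`|u(x)| ≤ C_ε e^{−(1−ε)ρ_E(x)}`. -/
theorem eigenfunction_decay_lattice (d : ℕ) (hd : 0 < d)
    (V : (Fin d → ℤ) → ℝ) (Vt : EuclideanSpace ℝ (Fin d) → ℝ)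
    (hext : ∀ m : Fin d → ℤ, Vt (WithLp.toLp 2 (fun i => (m i : ℝ))) = V m)
    (hVsm : ContDiff ℝ (⊤ : ℕ∞) Vt)
    (hVinf : ∀ ε > 0, ∃ R : ℝ, ∀ x : EuclideanSpace ℝ (Fin d), R ≤ ‖x‖ → -ε ≤ Vt x)
    (θ : ℝ) (hθ0 : 0 < θ) (hθ1 : θ ≤ 1)
    (hVdec : ∀ n : ℕ, ∃ C : ℝ, ∀ x : EuclideanSpace ℝ (Fin d),
      ‖iteratedFDeriv ℝ n Vt x‖ ≤ C * (1 + ‖x‖) ^ (-(θ * n)))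
    (E : ℝ) (hE : E < 0)
    (u : (Fin d → ℤ) → ℂ) (hu : Memℓp u 2)
    (heig : ∀ x, HlatZ V u x = (E : ℂ) * u x) :
    ∀ ε > 0, ∃ C > 0, ∀ x : Fin d → ℤ,
      ‖u x‖ ≤ C * Real.exp (-(1 - ε) * rhoE E x) := by
  classical
  have key : ∀ ε : ℝ, 0 < ε → ε < 1 → ∃ C > 0, ∀ x : Fin d → ℤ,
      ‖u x‖ ≤ C * Real.exp (-(1 - ε) * rhoE E x) := by
    intro ε hε hε1
    have hEabs : |E| = -E := abs_of_neg hE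
    have hEpos : 0 < |E| := by rw [hEabs]; linarith
    obtain ⟨R0, hR0⟩ := hVinf (ε * |E|) (by positivity)
    set R : ℝ := max R0 1 with hRdef
    set h : (Fin d → ℤ) → ℝ := fun x => Real.exp (-(1 - ε) * rhoE E x) with hhdef
    have hhpos : ∀ x, 0 < h x := fun x => Real.exp_pos _
    have hVt : ∀ m : Fin d → ℤ, Vt (embZ m) = V m := fun m => hext m
    have hVlow : ∀ x : Fin d → ℤ, R ≤ ‖embZ x‖ → -(ε * |E|) ≤ V x := by
      intro x hx
      have := hR0 (embZ x) (le_trans (le_max_left _ _) hx)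
      rwa [hVt] at this
    -- supersolution property of h outside the ball of radius R
    have hsupersol : ∀ x : Fin d → ℤ, R ≤ ‖embZ x‖ →
        ∑ j : Fin d, (h (x + Pi.single j 1) + h (x - Pi.single j 1))
          ≤ (2 * (d : ℝ) + V x - E) * h x := by
      intro x hx
      obtain ⟨⟨ξ, hξK, hξeq⟩, _⟩ := rhoE_spec E x
      have hstep : ∀ j : Fin d, h (x + Pi.single j 1) + h (x - Pi.single j 1)
          ≤ (2 + 4 * Real.sinh ((1 - ε) * (ξ j / 2)) ^ 2) * h x := by
        intro j
        have hub1 := (rhoE_spec E (x + Pi.single j 1)).2 ξ hξK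
        have hub2 := (rhoE_spec E (x - Pi.single j 1)).2 ξ hξK
        rw [sum_add_single] at hub1
        rw [sum_sub_single] at hub2
        rw [← hξeq] at hub1 hub2
        have e1 : h (x + Pi.single j 1) ≤ Real.exp (-(1 - ε) * ξ j) * h x := by
          rw [hhdef, ← Real.exp_add]
          apply Real.exp_le_exp.2
          nlinarith
        have e2 : h (x - Pi.single j 1) ≤ Real.exp ((1 - ε) * ξ j) * h x := by
          rw [hhdef, ← Real.exp_add]
          apply Real.exp_le_exp.2
          nlinarith
        have hid : Real.exp (-(1 - ε) * ξ j) + Real.exp ((1 - ε) * ξ j)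
            = 2 + 4 * Real.sinh ((1 - ε) * (ξ j / 2)) ^ 2 := by
          have := exp_add_exp_neg_aux ((1 - ε) * ξ j)
          have hs : (1 - ε) * ξ j / 2 = (1 - ε) * (ξ j / 2) := by ring
          rw [hs] at this
          rw [← this]
          rw [show -(1 - ε) * ξ j = -((1 - ε) * ξ j) by ring]
          ring
        calc h (x + Pi.single j 1) + h (x - Pi.single j 1)
            ≤ (Real.exp (-(1 - ε) * ξ j) + Real.exp ((1 - ε) * ξ j)) * h x := by
              rw [add_mul]; exact add_le_add e1 e2
          _ = (2 + 4 * Real.sinh ((1 - ε) * (ξ j / 2)) ^ 2) * h x := by rw [hid]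
      have hsum1 : ∑ j : Fin d, (h (x + Pi.single j 1) + h (x - Pi.single j 1))
          ≤ ∑ j : Fin d, (2 + 4 * Real.sinh ((1 - ε) * (ξ j / 2)) ^ 2) * h x :=
        Finset.sum_le_sum (fun j _ => hstep j)
      have hsum2 : ∑ j : Fin d, (2 + 4 * Real.sinh ((1 - ε) * (ξ j / 2)) ^ 2) * h x
          = (2 * (d : ℝ) + 4 * ∑ j, Real.sinh ((1 - ε) * (ξ j / 2)) ^ 2) * h x := by
        rw [← Finset.sum_mul]
        congr 1
        rw [Finset.sum_add_distrib, ← Finset.mul_sum, Finset.sum_const, Finset.card_univ,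
          Fintype.card_fin, nsmul_eq_mul]
        push_cast
        ring
      have hsinh : 4 * ∑ j, Real.sinh ((1 - ε) * (ξ j / 2)) ^ 2 ≤ (1 - ε) ^ 2 * |E| := by
        have hterm : ∀ j, Real.sinh ((1 - ε) * (ξ j / 2)) ^ 2
            ≤ (1 - ε) ^ 2 * Real.sinh (ξ j / 2) ^ 2 := fun j =>
          sinh_sq_scale_aux (by linarith) (by linarith) (ξ j / 2)
        have h1 : ∑ j, Real.sinh ((1 - ε) * (ξ j / 2)) ^ 2
            ≤ (1 - ε) ^ 2 * ∑ j, Real.sinh (ξ j / 2) ^ 2 := by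
          rw [Finset.mul_sum]
          exact Finset.sum_le_sum (fun j _ => hterm j)
        nlinarith
      have hVfin : (1 - ε) ^ 2 * |E| ≤ V x - E := by
        have hV := hVlow x hx
        nlinarith [mul_nonneg (mul_nonneg hε.le (by linarith : (0:ℝ) ≤ 1 - ε)) hEpos.le]
      calc ∑ j : Fin d, (h (x + Pi.single j 1) + h (x - Pi.single j 1))
          ≤ (2 * (d : ℝ) + 4 * ∑ j, Real.sinh ((1 - ε) * (ξ j / 2)) ^ 2) * h x := by
            rw [← hsum2]; exact hsum1
        _ ≤ (2 * (d : ℝ) + V x - E) * h x := by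
            have := hhpos x
            nlinarith
    -- subsolution property of ‖u‖
    have hsubsol : ∀ x : Fin d → ℤ, 0 ≤ 2 * (d : ℝ) + V x - E →
        (2 * (d : ℝ) + V x - E) * ‖u x‖
          ≤ ∑ j : Fin d, (‖u (x + Pi.single j 1)‖ + ‖u (x - Pi.single j 1)‖) := by
      intro x hc
      have hs := eigen_sum_aux V u E heig x
      have heq : (2 * (d : ℝ) + V x - E) * ‖u x‖
          = ‖∑ j : Fin d, (u (x + Pi.single j 1) + u (x - Pi.single j 1))‖ := by
        rw [hs, norm_mul, Complex.norm_real, Real.norm_eq_abs, abs_of_nonneg hc]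
      rw [heq]
      exact (norm_sum_le _ _).trans (Finset.sum_le_sum (fun j _ => norm_add_le _ _))
    -- decay of u at infinity
    have hdecay : ∀ a : ℝ, 0 < a → {x : Fin d → ℤ | a ≤ ‖u x‖}.Finite := by
      intro a ha
      have hsum := hu.summable (p := 2) (by norm_num)
      have ht := hsum.tendsto_cofinite_zero
      have hev : ∀ᶠ x in Filter.cofinite,
          ‖u x‖ ^ (2 : ENNReal).toReal < a ^ (2 : ENNReal).toReal :=
        Filter.Tendsto.eventually_lt_const (Real.rpow_pos_of_pos ha _) ht
      apply (Filter.eventually_cofinite.1 hev).subset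
      intro x hx
      simp only [Set.mem_setOf_eq, not_lt]
      exact Real.rpow_le_rpow ha.le hx ENNReal.toReal_nonneg
    -- the ball is finite
    have hball : {x : Fin d → ℤ | ‖embZ x‖ < R}.Finite := by
      apply Set.Finite.subset (Set.finite_Icc (fun _ : Fin d => -⌈R⌉) (fun _ => ⌈R⌉))
      intro x hx
      rw [Set.mem_Icc]
      have hcoord : ∀ i, |(x i : ℝ)| ≤ R := fun i => (embZ_coord_le x i).trans hx.le
      constructor <;> intro i
      · have h1 := (abs_le.1 (hcoord i)).1
        have h2 : (-⌈R⌉ : ℝ) ≤ (x i : ℝ) := by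
          have := Int.le_ceil R
          push_cast
          linarith
        exact_mod_cast h2
      · have h1 := (abs_le.1 (hcoord i)).2
        have h2 : (x i : ℝ) ≤ (⌈R⌉ : ℝ) := h1.trans (Int.le_ceil R)
        exact_mod_cast h2
    obtain ⟨A, hApos, hAball⟩ : ∃ A : ℝ, 0 < A ∧
        ∀ x : Fin d → ℤ, ‖embZ x‖ < R → ‖u x‖ ≤ A * h x := by
      refine ⟨1 + ∑ x ∈ hball.toFinset, ‖u x‖ / h x, ?_, ?_⟩
      · have : 0 ≤ ∑ x ∈ hball.toFinset, ‖u x‖ / h x :=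
          Finset.sum_nonneg (fun x _ => div_nonneg (norm_nonneg _) (hhpos x).le)
        linarith
      · intro x hx
        have hxS : x ∈ hball.toFinset := hball.mem_toFinset.2 hx
        have h1 : ‖u x‖ / h x ≤ 1 + ∑ x ∈ hball.toFinset, ‖u x‖ / h x := by
          have := Finset.single_le_sum (f := fun y => ‖u y‖ / h y)
            (fun y _ => div_nonneg (norm_nonneg _) (hhpos y).le) hxS
          linarith
        rw [div_le_iff₀ (hhpos x)] at h1
        calc ‖u x‖ ≤ (1 + ∑ x ∈ hball.toFinset, ‖u x‖ / h x) * h x := h1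
          _ = _ := rfl
    -- main claim by the maximum principle
    have hmain : ∀ x : Fin d → ℤ, ‖u x‖ ≤ A * h x := by
      by_contra hcon
      push_neg at hcon
      obtain ⟨x1, hx1⟩ := hcon
      set v : (Fin d → ℤ) → ℝ := fun x => ‖u x‖ - A * h x with hvdef
      have hvapp : ∀ x, v x = ‖u x‖ - A * h x := fun x => rfl
      have hvx1 : 0 < v x1 := by rw [hvapp]; linarith
      have hvle : ∀ x, v x ≤ ‖u x‖ := by
        intro x
        rw [hvapp]
        nlinarith [hhpos x, hApos]
      have hTfin : {x : Fin d → ℤ | v x1 ≤ v x}.Finite := by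
        apply (hdecay (v x1) hvx1).subset
        intro x hx
        exact le_trans hx (hvle x)
      have hx1T : x1 ∈ hTfin.toFinset := hTfin.mem_toFinset.2 (le_refl (v x1))
      have hne : hTfin.toFinset.Nonempty := ⟨x1, hx1T⟩
      obtain ⟨x0, hx0T, hx0max⟩ := Finset.exists_max_image hTfin.toFinset v hne
      have hx0v : v x1 ≤ v x0 := hTfin.mem_toFinset.1 hx0T
      have hglobal : ∀ y, v y ≤ v x0 := by
        intro y
        by_cases hy : v x1 ≤ v y
        · exact hx0max y (hTfin.mem_toFinset.2 hy)
        · push_neg at hy; linarith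
      have hx0pos : 0 < v x0 := lt_of_lt_of_le hvx1 hx0v
      have hx0R : R ≤ ‖embZ x0‖ := by
        by_contra hR
        push_neg at hR
        have := hAball x0 hR
        rw [hvapp] at hx0pos
        linarith
      have hVx0 : -(ε * |E|) ≤ V x0 := hVlow x0 hx0R
      have hcE : (1 - ε) * |E| ≤ V x0 - E := by nlinarith [hVx0, hEabs]
      have hcpos : 0 < V x0 - E := by nlinarith [mul_pos (by linarith : (0:ℝ) < 1 - ε) hEpos]
      have hc2 : 0 ≤ 2 * (d : ℝ) + V x0 - E := by
        have hdnn : (0:ℝ) ≤ (d:ℝ) := Nat.cast_nonneg d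
        linarith
      have h1 := hsubsol x0 hc2
      have h2 := hsupersol x0 hx0R
      have h3 : ∀ j : Fin d, ‖u (x0 + Pi.single j 1)‖ + ‖u (x0 - Pi.single j 1)‖
          ≤ 2 * v x0 + A * (h (x0 + Pi.single j 1) + h (x0 - Pi.single j 1)) := by
        intro j
        have ha := hglobal (x0 + Pi.single j 1)
        have hb := hglobal (x0 - Pi.single j 1)
        rw [hvapp] at ha hb
        linarith
      have h4 : ∑ j : Fin d, (‖u (x0 + Pi.single j 1)‖ + ‖u (x0 - Pi.single j 1)‖)
          ≤ 2 * (d : ℝ) * v x0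
            + A * ∑ j : Fin d, (h (x0 + Pi.single j 1) + h (x0 - Pi.single j 1)) := by
        calc ∑ j : Fin d, (‖u (x0 + Pi.single j 1)‖ + ‖u (x0 - Pi.single j 1)‖)
            ≤ ∑ j : Fin d, (2 * v x0
                + A * (h (x0 + Pi.single j 1) + h (x0 - Pi.single j 1))) :=
              Finset.sum_le_sum (fun j _ => h3 j)
          _ = 2 * (d : ℝ) * v x0
              + A * ∑ j : Fin d, (h (x0 + Pi.single j 1) + h (x0 - Pi.single j 1)) := by
            rw [Finset.sum_add_distrib, Finset.sum_const, Finset.card_univ, Fintype.card_fin,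
              nsmul_eq_mul, ← Finset.mul_sum]
            push_cast
            ring
      have h5 : (2 * (d : ℝ) + V x0 - E) * ‖u x0‖
          ≤ 2 * (d : ℝ) * v x0 + A * ((2 * (d : ℝ) + V x0 - E) * h x0) := by
        calc (2 * (d : ℝ) + V x0 - E) * ‖u x0‖
            ≤ ∑ j : Fin d, (‖u (x0 + Pi.single j 1)‖ + ‖u (x0 - Pi.single j 1)‖) := h1
          _ ≤ 2 * (d : ℝ) * v x0
              + A * ∑ j : Fin d, (h (x0 + Pi.single j 1) + h (x0 - Pi.single j 1)) := h4
          _ ≤ 2 * (d : ℝ) * v x0 + A * ((2 * (d : ℝ) + V x0 - E) * h x0) := by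
            have := mul_le_mul_of_nonneg_left h2 hApos.le
            linarith
      -- contradiction
      have hvx0 : v x0 = ‖u x0‖ - A * h x0 := hvapp x0
      nlinarith [hx0pos, hcpos, h5, hvx0, hhpos x0, mul_pos hcpos hx0pos]
    refine ⟨A, hApos, fun x => ?_⟩
    exact hmain x
  intro ε hε
  rcases lt_or_ge ε 1 with h1 | h1
  · exact key ε hε h1
  · obtain ⟨C, hC0, hC⟩ := key (1/2) (by norm_num) (by norm_num)
    refine ⟨C, hC0, fun x => ?_⟩
    refine (hC x).trans ?_
    have hρ := rhoE_nonneg' E x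
    have hle : -(1 - 1/2) * rhoE E x ≤ -(1 - ε) * rhoE E x := by nlinarith
    exact mul_le_mul_of_nonneg_left (Real.exp_le_exp.2 hle) hC0.le

end
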